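/- Let ‖·‖ be a subadditive homogeneous norm on T̃⁽ᵐ⁾(V) and d(g,h) = ‖g⁻¹ ⊗ h‖. There is a constant C_m > 0 such that for all g, h ∈ T̃⁽ᵐ⁾(V): if max_{i=1..m} |hⁱ − gⁱ| ≤ 1 then d(g,h) ≤ C_m max{1, ‖g‖} (max_{i=1..m} |hⁱ − gⁱ|)^{1/m}. -/

import Mathlib

open scoped BigOperators NNReal

/-- The `i`-th graded component of `x`, in the ambient algebra `A` which models the
truncated tensor algebra `T⁽ᵐ⁾(V)`. -/
noncomputable def gcomp {A : Type*} [NormedRing A] [NormedAlgebra ℝ A]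
    (𝒜 : ℕ → Submodule ℝ A) [GradedAlgebra 𝒜] (x : A) (i : ℕ) : A :=
  (DirectSum.decompose 𝒜 x i : A)

/-- The homogeneous norm `‖x‖ = max_{i=1..m} (i!|xⁱ|)^{1/i}`. -/
noncomputable def hnorm {A : Type*} [NormedRing A] [NormedAlgebra ℝ A]
    (𝒜 : ℕ → Submodule ℝ A) [GradedAlgebra 𝒜] (m : ℕ) (x : A) : ℝ :=
  (((Finset.Icc 1 m).sup fun i =>
    ((i.factorial : ℝ≥0) * ‖gcomp 𝒜 x i‖₊) ^ ((i : ℝ)⁻¹) : ℝ≥0) : ℝ)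

/-- `max_{i=1..m} |hⁱ − gⁱ|`. -/
noncomputable def maxDiff {A : Type*} [NormedRing A] [NormedAlgebra ℝ A]
    (𝒜 : ℕ → Submodule ℝ A) [GradedAlgebra 𝒜] (m : ℕ) (g h : A) : ℝ :=
  (((Finset.Icc 1 m).sup fun i => ‖gcomp 𝒜 h i - gcomp 𝒜 g i‖₊ : ℝ≥0) : ℝ)

/-! Write `g = 1 - x`; since `x` has no scalar part and the grading stops at `m`, `x ^ (m + 1) = 0`,
so `g⁻¹ = ∑_{k ≤ m} xᵏ` and `g⁻¹ h = 1 + g⁻¹ (h - g)`. With `M = max 1 ‖g‖` one has `|xⁱ| ≤ Mⁱ`,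
and the Cauchy product formula for graded components propagates bounds of the shape `a Mⁱ`
through products, giving `|(g⁻¹)ⁱ| ≤ c Mⁱ` and then `i! |(g⁻¹ h)ⁱ| ≤ K Mⁱ ε` with
`ε = max_i |hⁱ - gⁱ|`. Taking `i`-th roots, and using `ε ≤ ε^{i/m}` for `ε ≤ 1` and `i ≤ m`,
gives `‖g⁻¹ h‖ ≤ C M ε^{1/m}`. -/

open Finset Nat

theorem Ring.inverse_one_sub_eq_geom_sum {R : Type*} [Ring R] {x : R} {n : ℕ} (hx : x ^ n = 0) :
    Ring.inverse (1 - x) = ∑ k ∈ range n, x ^ k :=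
  Ring.inverse_unit ⟨1 - x, ∑ k ∈ range n, x ^ k, by simpa [hx] using mul_neg_geom_sum x n,
    by simpa [hx] using geom_sum_mul_neg x n⟩

section GradedComponents

variable {A : Type*} [NormedRing A] [NormedAlgebra ℝ A] (𝒜 : ℕ → Submodule ℝ A)
  [GradedAlgebra 𝒜]

theorem gcomp_add (x y : A) (i : ℕ) : gcomp 𝒜 (x + y) i = gcomp 𝒜 x i + gcomp 𝒜 y i := by
  simp [gcomp]

theorem gcomp_sub (x y : A) (i : ℕ) : gcomp 𝒜 (x - y) i = gcomp 𝒜 x i - gcomp 𝒜 y i := by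
  simp [gcomp]

theorem gcomp_sum {ι : Type*} (s : Finset ι) (f : ι → A) (i : ℕ) :
    gcomp 𝒜 (∑ j ∈ s, f j) i = ∑ j ∈ s, gcomp 𝒜 (f j) i := by
  simp [gcomp, DirectSum.decompose_sum]

theorem gcomp_one (i : ℕ) : gcomp 𝒜 (1 : A) i = if i = 0 then 1 else 0 := by
  split_ifs with hi
  · exact hi ▸ DirectSum.decompose_of_mem_same 𝒜 SetLike.GradedOne.one_mem
  · exact DirectSum.decompose_of_mem_ne 𝒜 SetLike.GradedOne.one_mem (Ne.symm hi)

theorem gcomp_mul (x y : A) (n : ℕ) :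
    gcomp 𝒜 (x * y) n = ∑ p ∈ antidiagonal n, gcomp 𝒜 x p.1 * gcomp 𝒜 y p.2 := by
  rw [gcomp, DirectSum.decompose_mul, DirectSum.coe_mul_apply_eq_sum_antidiagonal]
  rfl

theorem gcomp_pow_eq_zero_of_lt {x : A} (hx : gcomp 𝒜 x 0 = 0) {k n : ℕ} (hn : n < k) :
    gcomp 𝒜 (x ^ k) n = 0 := by
  induction k generalizing n with
  | zero => omega
  | succ k ih =>
    rw [pow_succ, gcomp_mul]
    refine sum_eq_zero fun p hp => ?_
    rw [HasAntidiagonal.mem_antidiagonal] at hp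
    rcases lt_or_ge p.1 k with hlt | hge
    · rw [ih hlt, zero_mul]
    · rw [show p.2 = 0 by omega, hx, mul_zero]

variable {𝒜} {m : ℕ}

theorem gcomp_eq_zero_of_lt (htrunc : ∀ i, m < i → 𝒜 i = ⊥) (x : A) {i : ℕ} (hi : m < i) :
    gcomp 𝒜 x i = 0 :=
  (Submodule.eq_bot_iff _).mp (htrunc i hi) _ (DirectSum.decompose 𝒜 x i).2

theorem sum_range_gcomp (htrunc : ∀ i, m < i → 𝒜 i = ⊥) (x : A) :
    ∑ i ∈ range (m + 1), gcomp 𝒜 x i = x := by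
  classical
  conv_rhs => rw [← DirectSum.sum_support_decompose 𝒜 x]
  refine (sum_subset (fun i hi => ?_) fun i _ hi => ?_).symm
  · rw [mem_range, Nat.lt_succ_iff]
    by_contra! hmi
    exact (DFinsupp.mem_support_iff.mp hi) (Subtype.ext (gcomp_eq_zero_of_lt htrunc x hmi))
  · rw [gcomp, DFinsupp.notMem_support_iff.mp hi]
    rfl

theorem pow_succ_eq_zero_of_gcomp_zero (htrunc : ∀ i, m < i → 𝒜 i = ⊥) {x : A}
    (hx : gcomp 𝒜 x 0 = 0) : x ^ (m + 1) = 0 := by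
  rw [← sum_range_gcomp htrunc (x ^ (m + 1))]
  exact sum_eq_zero fun n hn => gcomp_pow_eq_zero_of_lt 𝒜 hx (mem_range.mp hn)

end GradedComponents

section ComponentBounds

variable {A : Type*} [NormedRing A] [NormedAlgebra ℝ A] {𝒜 : ℕ → Submodule ℝ A}
  [GradedAlgebra 𝒜] {m : ℕ}

theorem norm_gcomp_mul_le {x y : A} {a b M : ℝ} (hx : ∀ p, ‖gcomp 𝒜 x p‖ ≤ a * M ^ p)
    (hy : ∀ q, ‖gcomp 𝒜 y q‖ ≤ b * M ^ q) (n : ℕ) :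
    ‖gcomp 𝒜 (x * y) n‖ ≤ (n + 1) * (a * b * M ^ n) := by
  rw [gcomp_mul]
  calc _ ≤ ∑ p ∈ antidiagonal n, ‖gcomp 𝒜 x p.1‖ * ‖gcomp 𝒜 y p.2‖ :=
        norm_sum_le_of_le _ fun p _ => norm_mul_le _ _
    _ ≤ ∑ p ∈ antidiagonal n, a * b * M ^ n := sum_le_sum fun p hp => by
        rw [← HasAntidiagonal.mem_antidiagonal.mp hp, pow_add]
        calc _ ≤ (a * M ^ p.1) * (b * M ^ p.2) :=
              mul_le_mul (hx _) (hy _) (norm_nonneg _) ((norm_nonneg _).trans (hx _))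
          _ = _ := by ring
    _ = _ := by simp [Nat.card_antidiagonal]

theorem norm_gcomp_pow_le (htrunc : ∀ i, m < i → 𝒜 i = ⊥) {x : A} {a M : ℝ} (ha : 0 ≤ a)
    (hM : 0 ≤ M) (hx : ∀ p, ‖gcomp 𝒜 x p‖ ≤ a * M ^ p) (k p : ℕ) :
    ‖gcomp 𝒜 (x ^ k) p‖ ≤ ‖(1 : A)‖ * ((m + 1) * a) ^ k * M ^ p := by
  induction k generalizing p with
  | zero =>
    rw [pow_zero, gcomp_one]
    split_ifs with hp
    · simp [hp]
    · simp only [norm_zero]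
      positivity
  | succ k ih =>
    rcases le_or_gt p m with hpm | hpm
    · calc _ ≤ (p + 1) * (‖(1 : A)‖ * ((m + 1) * a) ^ k * a * M ^ p) := by
            rw [pow_succ]
            exact norm_gcomp_mul_le ih hx p
        _ ≤ (m + 1) * (‖(1 : A)‖ * ((m + 1) * a) ^ k * a * M ^ p) := by
            gcongr
        _ = _ := by ring
    · rw [gcomp_eq_zero_of_lt htrunc _ hpm, norm_zero]
      positivity

theorem norm_gcomp_geom_sum_le (htrunc : ∀ i, m < i → 𝒜 i = ⊥) {x : A} {a M : ℝ} (ha : 0 ≤ a)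
    (hM : 0 ≤ M) (hx : ∀ p, ‖gcomp 𝒜 x p‖ ≤ a * M ^ p) (n p : ℕ) :
    ‖gcomp 𝒜 (∑ k ∈ range n, x ^ k) p‖ ≤
      (∑ k ∈ range n, ‖(1 : A)‖ * ((m + 1) * a) ^ k) * M ^ p := by
  rw [gcomp_sum, sum_mul]
  exact norm_sum_le_of_le _ fun k _ => norm_gcomp_pow_le htrunc ha hM hx k p

end ComponentBounds

section HomogeneousNorm

variable {A : Type*} [NormedRing A] [NormedAlgebra ℝ A] {𝒜 : ℕ → Submodule ℝ A}
  [GradedAlgebra 𝒜] {m : ℕ}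

theorem factorial_mul_norm_gcomp_le_hnorm_pow (x : A) {i : ℕ} (hi : i ∈ Icc 1 m) :
    (i ! : ℝ) * ‖gcomp 𝒜 x i‖ ≤ hnorm 𝒜 m x ^ i := by
  have hle := le_sup (f := fun i => ((i ! : ℝ≥0) * ‖gcomp 𝒜 x i‖₊) ^ ((i : ℝ)⁻¹)) hi
  rw [NNReal.rpow_inv_le_iff (by have := (mem_Icc.mp hi).1; positivity), NNReal.rpow_natCast]
    at hle
  exact_mod_cast hle

theorem hnorm_le_of_factorial_mul_norm_gcomp_le {x : A} {R : ℝ} (hR : 0 ≤ R)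
    (h : ∀ i ∈ Icc 1 m, (i ! : ℝ) * ‖gcomp 𝒜 x i‖ ≤ R ^ i) : hnorm 𝒜 m x ≤ R := by
  lift R to ℝ≥0 using hR
  rw [hnorm, NNReal.coe_le_coe]
  refine Finset.sup_le fun i hi => ?_
  rw [NNReal.rpow_inv_le_iff (by have := (mem_Icc.mp hi).1; positivity), NNReal.rpow_natCast]
  exact_mod_cast h i hi

theorem maxDiff_nonneg (g h : A) : 0 ≤ maxDiff 𝒜 m g h :=
  NNReal.coe_nonneg _

theorem norm_gcomp_sub_le_maxDiff (g h : A) {i : ℕ} (hi : i ∈ Icc 1 m) :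
    ‖gcomp 𝒜 h i - gcomp 𝒜 g i‖ ≤ maxDiff 𝒜 m g h :=
  NNReal.coe_le_coe.mpr (le_sup (f := fun i => ‖gcomp 𝒜 h i - gcomp 𝒜 g i‖₊) hi)

end HomogeneousNorm

section Group

variable {A : Type*} [NormedRing A] [NormedAlgebra ℝ A] {𝒜 : ℕ → Submodule ℝ A}
  [GradedAlgebra 𝒜] {m : ℕ}

theorem gcomp_one_sub_zero {g : A} (hg : gcomp 𝒜 g 0 = 1) : gcomp 𝒜 (1 - g) 0 = 0 := by
  rw [gcomp_sub, gcomp_one, if_pos rfl, hg, sub_self]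

theorem norm_gcomp_one_sub_le (htrunc : ∀ i, m < i → 𝒜 i = ⊥) {g : A} (hg : gcomp 𝒜 g 0 = 1)
    (p : ℕ) : ‖gcomp 𝒜 (1 - g) p‖ ≤ 1 * max 1 (hnorm 𝒜 m g) ^ p := by
  rcases eq_or_ne p 0 with rfl | hp0
  · rw [gcomp_one_sub_zero hg, norm_zero]
    positivity
  rcases le_or_gt p m with hpm | hpm
  · rw [gcomp_sub, gcomp_one, if_neg hp0, zero_sub, norm_neg, one_mul]
    calc ‖gcomp 𝒜 g p‖ ≤ (p ! : ℝ) * ‖gcomp 𝒜 g p‖ :=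
          le_mul_of_one_le_left (norm_nonneg _) (by exact_mod_cast p.factorial_pos)
      _ ≤ hnorm 𝒜 m g ^ p := factorial_mul_norm_gcomp_le_hnorm_pow g (mem_Icc.mpr ⟨by omega, hpm⟩)
      _ ≤ _ := by
          gcongr
          · exact NNReal.coe_nonneg _
          · exact le_max_right _ _
  · rw [gcomp_eq_zero_of_lt htrunc _ hpm, norm_zero]
    positivity

theorem norm_gcomp_sub_le_maxDiff_mul_pow (htrunc : ∀ i, m < i → 𝒜 i = ⊥) {g h : A}
    (hg : gcomp 𝒜 g 0 = 1) (hh : gcomp 𝒜 h 0 = 1) {M : ℝ} (hM : 1 ≤ M) (q : ℕ) :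
    ‖gcomp 𝒜 (h - g) q‖ ≤ maxDiff 𝒜 m g h * M ^ q := by
  have hε : 0 ≤ maxDiff 𝒜 m g h := maxDiff_nonneg g h
  rcases eq_or_ne q 0 with rfl | hq0
  · rw [gcomp_sub, hg, hh, sub_self, norm_zero]
    positivity
  rcases le_or_gt q m with hqm | hqm
  · rw [gcomp_sub]
    exact (norm_gcomp_sub_le_maxDiff g h (mem_Icc.mpr ⟨by omega, hqm⟩)).trans
      (le_mul_of_one_le_right hε (one_le_pow₀ hM))
  · rw [gcomp_eq_zero_of_lt htrunc _ hqm, norm_zero]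
    positivity

theorem inverse_eq_geom_sum_one_sub (htrunc : ∀ i, m < i → 𝒜 i = ⊥) {g : A}
    (hg : gcomp 𝒜 g 0 = 1) : Ring.inverse g = ∑ k ∈ range (m + 1), (1 - g) ^ k := by
  rw [← Ring.inverse_one_sub_eq_geom_sum
    (pow_succ_eq_zero_of_gcomp_zero htrunc (gcomp_one_sub_zero hg)), sub_sub_cancel]

theorem isUnit_of_gcomp_zero_eq_one (htrunc : ∀ i, m < i → 𝒜 i = ⊥) {g : A}
    (hg : gcomp 𝒜 g 0 = 1) : IsUnit g := by
  simpa using (IsNilpotent.isUnit_one_sub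
    ⟨m + 1, pow_succ_eq_zero_of_gcomp_zero htrunc (gcomp_one_sub_zero hg)⟩)

theorem exists_factorial_mul_norm_gcomp_inverse_mul_le (htrunc : ∀ i, m < i → 𝒜 i = ⊥) :
    ∃ K : ℝ, ∀ g h : A, gcomp 𝒜 g 0 = 1 → gcomp 𝒜 h 0 = 1 → ∀ i ∈ Icc 1 m,
      (i ! : ℝ) * ‖gcomp 𝒜 (Ring.inverse g * h) i‖ ≤
        K * max 1 (hnorm 𝒜 m g) ^ i * maxDiff 𝒜 m g h := by
  set c : ℝ := ∑ k ∈ range (m + 1), ‖(1 : A)‖ * (m + 1) ^ k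
  refine ⟨(m + 1)! * c, fun g h hg hh i hi => ?_⟩
  set M := max 1 (hnorm 𝒜 m g)
  have hsplit : Ring.inverse g * h = 1 + Ring.inverse g * (h - g) := by
    rw [mul_sub, Ring.inverse_mul_cancel g (isUnit_of_gcomp_zero_eq_one htrunc hg)]
    abel
  have hprod := norm_gcomp_mul_le
    (norm_gcomp_geom_sum_le htrunc zero_le_one (by positivity) (norm_gcomp_one_sub_le htrunc hg)
      (m + 1))
    (norm_gcomp_sub_le_maxDiff_mul_pow htrunc hg hh (le_max_left 1 _)) i
  rw [← inverse_eq_geom_sum_one_sub htrunc hg] at hprod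
  simp only [mul_one] at hprod
  obtain ⟨hi1, him⟩ := mem_Icc.mp hi
  rw [hsplit, gcomp_add, gcomp_one, if_neg (by omega), zero_add]
  calc (i ! : ℝ) * ‖gcomp 𝒜 (Ring.inverse g * (h - g)) i‖
      ≤ i ! * ((i + 1) * (c * maxDiff 𝒜 m g h * M ^ i)) := by gcongr
    _ = (i + 1)! * (c * maxDiff 𝒜 m g h * M ^ i) := by push_cast [factorial_succ]; ring
    _ ≤ (m + 1)! * (c * maxDiff 𝒜 m g h * M ^ i) := by
        have : 0 ≤ c := by positivity
        have : 0 ≤ maxDiff 𝒜 m g h := maxDiff_nonneg g h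
        gcongr
    _ = _ := by ring

end Group

theorem dist_le_of_maxDiff_le_general {A : Type*} [NormedRing A] [NormedAlgebra ℝ A]
    (𝒜 : ℕ → Submodule ℝ A) [GradedAlgebra 𝒜] (m : ℕ)
    (htrunc : ∀ i, m < i → 𝒜 i = ⊥) :
    ∃ C : ℝ, 0 < C ∧ ∀ g h : A, gcomp 𝒜 g 0 = 1 → gcomp 𝒜 h 0 = 1 →
      maxDiff 𝒜 m g h ≤ 1 →
      hnorm 𝒜 m (Ring.inverse g * h) ≤
        C * max 1 (hnorm 𝒜 m g) * maxDiff 𝒜 m g h ^ ((m : ℝ)⁻¹) := by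
  obtain ⟨K, hK⟩ := exists_factorial_mul_norm_gcomp_inverse_mul_le htrunc
  refine ⟨max 1 K, by positivity, fun g h hg hh hε1 => ?_⟩
  set ε := maxDiff 𝒜 m g h
  have hε : 0 ≤ ε := maxDiff_nonneg g h
  refine hnorm_le_of_factorial_mul_norm_gcomp_le (by positivity) fun i hi => ?_
  obtain ⟨hi1, him⟩ := mem_Icc.mp hi
  have hroot : ε ≤ (ε ^ ((m : ℝ)⁻¹)) ^ i := by
    conv_lhs => rw [← Real.rpow_inv_natCast_pow hε (n := m) (by omega)]
    exact pow_le_pow_of_le_one (by positivity) (Real.rpow_le_one hε hε1 (by positivity)) him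
  calc (i ! : ℝ) * ‖gcomp 𝒜 (Ring.inverse g * h) i‖
      ≤ K * max 1 (hnorm 𝒜 m g) ^ i * ε := hK g h hg hh i hi
    _ ≤ max 1 K ^ i * max 1 (hnorm 𝒜 m g) ^ i * (ε ^ ((m : ℝ)⁻¹)) ^ i := by
        gcongr
        exact (le_max_right 1 K).trans (le_self_pow₀ (le_max_left 1 K) (by omega))
    _ = _ := by ring

/-- There is `C_m > 0` such that for all `g, h ∈ T̃⁽ᵐ⁾(V)`, if
`max_{i=1..m} |hⁱ − gⁱ| ≤ 1` then
`d(g,h) = ‖g⁻¹ ⊗ h‖ ≤ C_m max{1, ‖g‖} (max_{i=1..m} |hⁱ − gⁱ|)^{1/m}`. -/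
theorem dist_le_of_maxDiff_le {A : Type*} [NormedRing A] [NormedAlgebra ℝ A]
    (𝒜 : ℕ → Submodule ℝ A) [GradedAlgebra 𝒜] (m : ℕ) (hm : 1 ≤ m)
    (htrunc : ∀ i, m < i → 𝒜 i = ⊥) :
    ∃ C : ℝ, 0 < C ∧ ∀ g h : A, gcomp 𝒜 g 0 = 1 → gcomp 𝒜 h 0 = 1 →
      maxDiff 𝒜 m g h ≤ 1 →
      hnorm 𝒜 m (Ring.inverse g * h) ≤
        C * max 1 (hnorm 𝒜 m g) * maxDiff 𝒜 m g h ^ ((m : ℝ)⁻¹) :=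
  dist_le_of_maxDiff_le_general 𝒜 m htrunc
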